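/- arXiv:1301.6400 — 5 statements merged into one kernel-verified Lean document; each statement's English description precedes it below -/
import Mathlib

section
/- Let A be a set of m alternatives, N = {1,…,n} a set of agents each with a linear preference order over A, α an m-candidate positional scoring function, and K a positive integer with K ≤ m. Consider the greedy procedure (Algorithm GM for Monroe): starting from S₀ = ∅, at each step j = 1,…,K pick an alternative a ∉ S_{j−1} maximizing z(S_{j−1} ∪ {a}) and set S_j = S_{j−1} ∪ {a}, where z(S) is the maximum total α-satisfaction of an optimal partial Monroe assignment of the alternatives in S (each with capacity ⌈n/K⌉) to the agents. Then the set S_K returned by the greedy procedure satisfies z(S_K) ≥ (1 − 1/e) · max_{S ⊆ A, |S| = K} z(S); that is, Algorithm GM is a (1 − 1/e)-approximation algorithm for the α-Monroe election problem for every positional scoring function α. -/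
open Finset

/-- Total α-satisfaction of the agents in `N'` under a partial assignment `Φ`
(agents assigned `none` (⊥) contribute 0). Agent `i`'s ranking is the
bijection `pos i` from alternatives to positions (position `0` = most preferred). -/
def satisf {m n : ℕ} (α : Fin m → ℕ) (pos : Fin n → Fin m ≃ Fin m)
    (N' : Finset (Fin n)) (Φ : Fin n → Option (Fin m)) : ℕ :=
  ∑ i ∈ N', Option.elim (Φ i) 0 (fun a => α (pos i a))

/-- A partial assignment `Φ` is feasible for a capacity function `s` if each
alternative `a` represents at most `s a` agents. -/
def feasible {m n : ℕ} (s : Fin m → ℕ) (Φ : Fin n → Option (Fin m)) : Prop :=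
  ∀ a : Fin m, (univ.filter (fun i => Φ i = some a)).card ≤ s a

instance {m n : ℕ} (s : Fin m → ℕ) : DecidablePred (feasible (n := n) s) := by
  unfold feasible; infer_instance

/-- `zval α pos N' s` is `z_{N'}(s)`: the maximum, over partial assignments `Φ`
feasible for the capacity function `s`, of the total satisfaction of agents in `N'`. -/
def zval {m n : ℕ} (α : Fin m → ℕ) (pos : Fin n → Fin m ≃ Fin m)
    (N' : Finset (Fin n)) (s : Fin m → ℕ) : ℕ :=
  (univ.filter (fun Φ : Fin n → Option (Fin m) => feasible s Φ)).sup (satisf α pos N')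

/-- The capacity function `s_S` associated to a set `S` of alternatives:
capacity `⌈n/K⌉` on members of `S` and `0` elsewhere. -/
def capOf {m : ℕ} (K n : ℕ) (S : Finset (Fin m)) : Fin m → ℕ :=
  fun a => if a ∈ S then (n + K - 1) / K else 0


namespace GMaux

variable {m n : ℕ}

/-- rank of `x` in `s`: number of elements of `s` smaller than `x`. -/
def rk (s : Finset (Fin n)) (x : Fin n) : ℕ := (s.filter (fun i => i < x)).card

lemma rk_lt_card {s : Finset (Fin n)} {x : Fin n} (hx : x ∈ s) : rk s x < s.card :=
  Finset.card_lt_card (Finset.filter_ssubset.2 ⟨x, hx, lt_irrefl x⟩)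

lemma rk_injOn {s : Finset (Fin n)} {x y : Fin n} (hx : x ∈ s) (hy : y ∈ s)
    (h : rk s x = rk s y) : x = y := by
  rcases lt_trichotomy x y with hlt | heq | hlt
  · exfalso
    have : rk s x < rk s y := Finset.card_lt_card (by
      constructor
      · intro i hi
        rw [Finset.mem_filter] at hi ⊢
        exact ⟨hi.1, lt_trans hi.2 hlt⟩
      · intro hsub
        have hxmem : x ∈ s.filter (fun i => i < y) := Finset.mem_filter.2 ⟨hx, hlt⟩
        have := hsub hxmem
        simp at this)
    omega
  · exact heq
  · exfalso
    have : rk s y < rk s x := Finset.card_lt_card (by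
      constructor
      · intro i hi
        rw [Finset.mem_filter] at hi ⊢
        exact ⟨hi.1, lt_trans hi.2 hlt⟩
      · intro hsub
        have hymem : y ∈ s.filter (fun i => i < x) := Finset.mem_filter.2 ⟨hy, hlt⟩
        have := hsub hymem
        simp at this)
    omega

lemma rk_surj {s : Finset (Fin n)} {r : ℕ} (hr : r < s.card) : ∃ x ∈ s, rk s x = r := by
  classical
  have himg : s.image (rk s) ⊆ Finset.range s.card := by
    intro t ht
    rcases Finset.mem_image.1 ht with ⟨x, hx, rfl⟩
    exact Finset.mem_range.2 (rk_lt_card hx)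
  have hcard : (s.image (rk s)).card = s.card :=
    Finset.card_image_of_injOn (fun x hx y hy h => rk_injOn hx hy h)
  have heq : s.image (rk s) = Finset.range s.card :=
    Finset.eq_of_subset_of_card_le himg (by rw [hcard, Finset.card_range])
  have : r ∈ s.image (rk s) := heq ▸ Finset.mem_range.2 hr
  rcases Finset.mem_image.1 this with ⟨x, hx, hxr⟩
  exact ⟨x, hx, hxr⟩

open Classical in
/-- the pairing partner of agent `x`'s `Φ₁`-incidence: an agent `j` with
`Φ₂ j = Φ₁ x` of the same rank, if one exists. -/
noncomputable def prevFn (Φ₁ Φ₂ : Fin n → Option (Fin m)) (x : Fin n) : Option (Fin n) :=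
  (Φ₁ x).bind fun d =>
    if h : ∃ j, Φ₂ j = some d ∧
        rk (univ.filter fun i => Φ₂ i = some d) j
          = rk (univ.filter fun i => Φ₁ i = some d) x
    then some h.choose else none

lemma prevFn_spec {Φ₁ Φ₂ : Fin n → Option (Fin m)} {x j : Fin n}
    (h : prevFn Φ₁ Φ₂ x = some j) :
    ∃ d, Φ₁ x = some d ∧ Φ₂ j = some d ∧
      rk (univ.filter fun i => Φ₂ i = some d) j
        = rk (univ.filter fun i => Φ₁ i = some d) x := by
  classical
  unfold prevFn at h
  cases hΦ : Φ₁ x with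
  | none => rw [hΦ] at h; simp at h
  | some d =>
    rw [hΦ] at h
    simp only [Option.bind_some] at h
    split_ifs at h with hc
    · obtain rfl : hc.choose = j := by injection h
      exact ⟨d, rfl, hc.choose_spec.1, hc.choose_spec.2⟩

lemma prevFn_inj {Φ₁ Φ₂ : Fin n → Option (Fin m)} {x y j : Fin n}
    (hx : prevFn Φ₁ Φ₂ x = some j) (hy : prevFn Φ₁ Φ₂ y = some j) : x = y := by
  obtain ⟨d, h1, h2, h3⟩ := prevFn_spec hx
  obtain ⟨d', h1', h2', h3'⟩ := prevFn_spec hy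
  have hdd : d = d' := by rw [h2] at h2'; injection h2'
  subst hdd
  refine rk_injOn (s := univ.filter fun i => Φ₁ i = some d) ?_ ?_ (h3 ▸ h3' ▸ rfl)
  · exact Finset.mem_filter.2 ⟨Finset.mem_univ _, h1⟩
  · exact Finset.mem_filter.2 ⟨Finset.mem_univ _, h1'⟩

lemma prevFn_total {Φ₁ Φ₂ : Fin n → Option (Fin m)} {x : Fin n} {d : Fin m}
    (hx : Φ₁ x = some d)
    (hc : (univ.filter fun i => Φ₁ i = some d).card
        ≤ (univ.filter fun i => Φ₂ i = some d).card) :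
    ∃ j, prevFn Φ₁ Φ₂ x = some j := by
  classical
  have hxm : x ∈ univ.filter fun i => Φ₁ i = some d :=
    Finset.mem_filter.2 ⟨Finset.mem_univ _, hx⟩
  have hlt : rk (univ.filter fun i => Φ₁ i = some d) x
      < (univ.filter fun i => Φ₂ i = some d).card := lt_of_lt_of_le (rk_lt_card hxm) hc
  obtain ⟨j, hj, hjr⟩ := rk_surj hlt
  have hcond : ∃ j, Φ₂ j = some d ∧
      rk (univ.filter fun i => Φ₂ i = some d) j
        = rk (univ.filter fun i => Φ₁ i = some d) x :=
    ⟨j, (Finset.mem_filter.1 hj).2, hjr⟩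
  refine ⟨hcond.choose, ?_⟩
  unfold prevFn
  rw [hx]
  simp only [Option.bind_some]
  rw [dif_pos hcond]

lemma prevFn_surj {Φ₁ Φ₂ : Fin n → Option (Fin m)} {j : Fin n} {d : Fin m}
    (hj : Φ₂ j = some d)
    (hc : (univ.filter fun i => Φ₂ i = some d).card
        ≤ (univ.filter fun i => Φ₁ i = some d).card) :
    ∃ x, prevFn Φ₁ Φ₂ x = some j := by
  classical
  have hjm : j ∈ univ.filter fun i => Φ₂ i = some d :=
    Finset.mem_filter.2 ⟨Finset.mem_univ _, hj⟩
  have hlt : rk (univ.filter fun i => Φ₂ i = some d) j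
      < (univ.filter fun i => Φ₁ i = some d).card := lt_of_lt_of_le (rk_lt_card hjm) hc
  obtain ⟨x, hxm, hxr⟩ := rk_surj hlt
  have hx : Φ₁ x = some d := (Finset.mem_filter.1 hxm).2
  have hcond : ∃ j', Φ₂ j' = some d ∧
      rk (univ.filter fun i => Φ₂ i = some d) j'
        = rk (univ.filter fun i => Φ₁ i = some d) x :=
    ⟨j, hj, hxr.symm⟩
  refine ⟨x, ?_⟩
  unfold prevFn
  rw [hx]
  simp only [Option.bind_some]
  rw [dif_pos hcond]
  congr 1
  have h1 := hcond.choose_spec.1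
  have h2 := hcond.choose_spec.2
  refine rk_injOn (s := univ.filter fun i => Φ₂ i = some d) ?_ hjm ?_
  · exact Finset.mem_filter.2 ⟨Finset.mem_univ _, h1⟩
  · rw [h2, hxr]


/-- iterated `prevFn` (`k` steps of walking backwards along the trail). -/
noncomputable def anc (Φ₁ Φ₂ : Fin n → Option (Fin m)) (k : ℕ) (i : Fin n) : Option (Fin n) :=
  ((fun o : Option (Fin n) => o.bind (prevFn Φ₁ Φ₂))^[k]) (some i)

lemma anc_zero (Φ₁ Φ₂ : Fin n → Option (Fin m)) (i : Fin n) : anc Φ₁ Φ₂ 0 i = some i := rfl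

lemma anc_succ_of_prev {Φ₁ Φ₂ : Fin n → Option (Fin m)} {i j : Fin n}
    (h : prevFn Φ₁ Φ₂ i = some j) (k : ℕ) : anc Φ₁ Φ₂ (k + 1) i = anc Φ₁ Φ₂ k j := by
  unfold anc
  rw [Function.iterate_succ_apply]
  simp only [Option.bind_some, h]

lemma anc_succ_of_none {Φ₁ Φ₂ : Fin n → Option (Fin m)} {i : Fin n}
    (h : prevFn Φ₁ Φ₂ i = none) (k : ℕ) : anc Φ₁ Φ₂ (k + 1) i = none := by
  unfold anc
  rw [Function.iterate_succ_apply]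
  simp only [Option.bind_some, h]
  exact Function.iterate_fixed rfl k

/-- `sig b i` : the trail through `i` starts at an edge assigned to `b` by `Φ₁`. -/
def sig (Φ₁ Φ₂ : Fin n → Option (Fin m)) (b : Fin m) (i : Fin n) : Prop :=
  ∃ k j, anc Φ₁ Φ₂ k i = some j ∧ Φ₁ j = some b

lemma sig_self {Φ₁ Φ₂ : Fin n → Option (Fin m)} {b : Fin m} {i : Fin n}
    (h : Φ₁ i = some b) : sig Φ₁ Φ₂ b i := ⟨0, i, rfl, h⟩

lemma sig_prev {Φ₁ Φ₂ : Fin n → Option (Fin m)} {b : Fin m} {i j : Fin n}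
    (hb2 : ∀ x, Φ₂ x ≠ some b) (h : prevFn Φ₁ Φ₂ i = some j) :
    (sig Φ₁ Φ₂ b i ↔ sig Φ₁ Φ₂ b j) := by
  have hib : Φ₁ i ≠ some b := by
    intro hib
    obtain ⟨d, h1, h2, _⟩ := prevFn_spec h
    rw [hib] at h1
    obtain rfl : b = d := by injection h1
    exact hb2 j h2
  constructor
  · rintro ⟨k, jb, hk, hjb⟩
    cases k with
    | zero =>
      rw [anc_zero] at hk
      obtain rfl : i = jb := by injection hk
      exact absurd hjb hib
    | succ k =>
      rw [anc_succ_of_prev h] at hk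
      exact ⟨k, jb, hk, hjb⟩
  · rintro ⟨k, jb, hk, hjb⟩
    exact ⟨k + 1, jb, (anc_succ_of_prev h k).symm ▸ hk, hjb⟩

lemma not_sig_of_start {Φ₁ Φ₂ : Fin n → Option (Fin m)} {a b : Fin m} {i : Fin n}
    (h : Φ₁ i = some a) (ha2 : ∀ x, Φ₂ x ≠ some a) (hab : a ≠ b) :
    ¬ sig Φ₁ Φ₂ b i := by
  rintro ⟨k, j, hk, hj⟩
  have hprev : prevFn Φ₁ Φ₂ i = none := by
    classical
    unfold prevFn
    rw [h]
    simp only [Option.bind_some]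
    rw [dif_neg]
    rintro ⟨j', hj', -⟩
    exact ha2 j' hj'
  cases k with
  | zero =>
    rw [anc_zero] at hk
    obtain rfl : i = j := by injection hk
    rw [h] at hj
    exact hab (by injection hj)
  | succ k =>
    rw [anc_succ_of_none hprev] at hk
    simp at hk

lemma count_le (Φ₁ Φ₂ : Fin n → Option (Fin m)) (γ : Fin n → Prop)
    (hγ : ∀ x j, prevFn Φ₁ Φ₂ x = some j → (γ x ↔ γ j)) (d : Fin m) (X : Finset (Fin n))
    (hX : ∀ i, i ∈ X ↔ (γ i ∧ Φ₁ i = some d) ∨ (¬ γ i ∧ Φ₂ i = some d)) :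
    X.card ≤ max (univ.filter fun i => Φ₁ i = some d).card
          (univ.filter fun i => Φ₂ i = some d).card := by
  classical
  set s1 := univ.filter fun i => Φ₁ i = some d with hs1
  set s2 := univ.filter fun i => Φ₂ i = some d with hs2
  rcases le_total s1.card s2.card with hc | hc
  · -- inject X into s2
    refine le_max_of_le_right (Finset.card_le_card_of_injOn
      (fun i => if γ i then (prevFn Φ₁ Φ₂ i).getD i else i) ?_ ?_)
    · intro i hi
      rcases (hX i).1 hi with ⟨hgi, h1⟩ | ⟨hgi, h2⟩
      · obtain ⟨j, hj⟩ := prevFn_total h1 hc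
        obtain ⟨d', hd1, hd2, -⟩ := prevFn_spec hj
        rw [h1] at hd1
        obtain rfl : d = d' := by injection hd1
        simp only [if_pos hgi, hj, Option.getD_some]
        exact Finset.mem_filter.2 ⟨Finset.mem_univ _, hd2⟩
      · simp only [if_neg hgi]
        exact Finset.mem_filter.2 ⟨Finset.mem_univ _, h2⟩
    · intro i hi i' hi' hff
      rw [Finset.mem_coe] at hi hi'
      dsimp only at hff
      rcases (hX i).1 hi with ⟨hgi, h1⟩ | ⟨hgi, h2⟩ <;>
        rcases (hX i').1 hi' with ⟨hgi', h1'⟩ | ⟨hgi', h2'⟩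
      · obtain ⟨j, hj⟩ := prevFn_total h1 hc
        obtain ⟨j', hj'⟩ := prevFn_total h1' hc
        rw [if_pos hgi, if_pos hgi', hj, hj'] at hff
        simp only [Option.getD_some] at hff
        exact prevFn_inj hj (hff ▸ hj')
      · obtain ⟨j, hj⟩ := prevFn_total h1 hc
        rw [if_pos hgi, if_neg hgi', hj] at hff
        simp only [Option.getD_some] at hff
        exact absurd (((hγ i j hj).1 hgi)) (hff ▸ hgi')
      · obtain ⟨j', hj'⟩ := prevFn_total h1' hc
        rw [if_neg hgi, if_pos hgi', hj'] at hff
        simp only [Option.getD_some] at hff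
        exact absurd (hff ▸ (hγ i' j' hj').1 hgi') hgi
      · rw [if_neg hgi, if_neg hgi'] at hff
        exact hff
  · -- inject X into s1
    refine le_max_of_le_left (Finset.card_le_card_of_injOn
      (fun i => if γ i then i
        else if h : ∃ x, prevFn Φ₁ Φ₂ x = some i then h.choose else i) ?_ ?_)
    · intro i hi
      rcases (hX i).1 hi with ⟨hgi, h1⟩ | ⟨hgi, h2⟩
      · simp only [if_pos hgi]
        exact Finset.mem_filter.2 ⟨Finset.mem_univ _, h1⟩
      · have hex : ∃ x, prevFn Φ₁ Φ₂ x = some i := prevFn_surj h2 hc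
        simp only [if_neg hgi, dif_pos hex]
        obtain ⟨d', hd1, hd2, -⟩ := prevFn_spec hex.choose_spec
        rw [h2] at hd2
        obtain rfl : d = d' := by injection hd2
        exact Finset.mem_filter.2 ⟨Finset.mem_univ _, hd1⟩
    · intro i hi i' hi' hff
      rw [Finset.mem_coe] at hi hi'
      dsimp only at hff
      rcases (hX i).1 hi with ⟨hgi, h1⟩ | ⟨hgi, h2⟩ <;>
        rcases (hX i').1 hi' with ⟨hgi', h1'⟩ | ⟨hgi', h2'⟩
      · rw [if_pos hgi, if_pos hgi'] at hff
        exact hff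
      · have hex' : ∃ x, prevFn Φ₁ Φ₂ x = some i' := prevFn_surj h2' hc
        rw [if_pos hgi, if_neg hgi', dif_pos hex'] at hff
        have := (hγ _ _ hex'.choose_spec).1 (hff ▸ hgi)
        exact absurd this hgi'
      · have hex : ∃ x, prevFn Φ₁ Φ₂ x = some i := prevFn_surj h2 hc
        rw [if_neg hgi, if_pos hgi', dif_pos hex] at hff
        have := (hγ _ _ hex.choose_spec).1 (hff.symm ▸ hgi')
        exact absurd this hgi
      · have hex : ∃ x, prevFn Φ₁ Φ₂ x = some i := prevFn_surj h2 hc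
        have hex' : ∃ x, prevFn Φ₁ Φ₂ x = some i' := prevFn_surj h2' hc
        rw [if_neg hgi, dif_pos hex, if_neg hgi', dif_pos hex'] at hff
        have h1 := hex.choose_spec
        have h2 := hex'.choose_spec
        rw [hff] at h1
        rw [h1] at h2
        injection h2


section zvalBasics

variable {N' : Finset (Fin n)} {α : Fin m → ℕ} {pos : Fin n → Fin m ≃ Fin m}
variable {s s' : Fin m → ℕ}

lemma feasible_bot (s : Fin m → ℕ) : feasible s (fun _ : Fin n => none (α := Fin m)) := by
  intro a
  simp [feasible]

lemma le_zval {Φ : Fin n → Option (Fin m)} (hΦ : feasible s Φ) :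
    satisf α pos N' Φ ≤ zval α pos N' s :=
  Finset.le_sup (Finset.mem_filter.2 ⟨Finset.mem_univ _, hΦ⟩)

lemma zval_exists (α : Fin m → ℕ) (pos : Fin n → Fin m ≃ Fin m) (N' : Finset (Fin n))
    (s : Fin m → ℕ) :
    ∃ Φ, feasible s Φ ∧ satisf α pos N' Φ = zval α pos N' s := by
  have hne : (univ.filter fun Φ : Fin n → Option (Fin m) => feasible s Φ).Nonempty :=
    ⟨fun _ => none, Finset.mem_filter.2 ⟨Finset.mem_univ _, feasible_bot s⟩⟩
  obtain ⟨Φ, hΦ, hval⟩ := Finset.exists_mem_eq_sup _ hne (satisf α pos N')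
  exact ⟨Φ, (Finset.mem_filter.1 hΦ).2, hval.symm⟩

lemma zval_mono (h : ∀ d, s d ≤ s' d) : zval α pos N' s ≤ zval α pos N' s' := by
  apply Finset.sup_mono
  intro Φ hΦ
  rw [Finset.mem_filter] at hΦ ⊢
  exact ⟨hΦ.1, fun a => le_trans (hΦ.2 a) (h a)⟩

lemma capOf_le {K : ℕ} {S S' : Finset (Fin m)} (h : S ⊆ S') (d : Fin m) :
    capOf K n S d ≤ capOf K n S' d := by
  unfold capOf
  by_cases hd : d ∈ S
  · rw [if_pos hd, if_pos (h hd)]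
  · rw [if_neg hd]
    exact Nat.zero_le _

lemma zval_mono_set {K : ℕ} {S S' : Finset (Fin m)} (h : S ⊆ S') :
    zval α pos N' (capOf K n S) ≤ zval α pos N' (capOf K n S') :=
  zval_mono (capOf_le h)

lemma feasible_notMem {Φ : Fin n → Option (Fin m)} {d : Fin m}
    (hΦ : feasible s Φ) (hd : s d = 0) : ∀ x, Φ x ≠ some d := by
  intro x hx
  have h := hΦ d
  rw [hd, Nat.le_zero, Finset.card_eq_zero] at h
  have : x ∈ (univ.filter fun i => Φ i = some d) :=
    Finset.mem_filter.2 ⟨Finset.mem_univ _, hx⟩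
  rw [h] at this
  simp at this

lemma feasible_card_le {Φ : Fin n → Option (Fin m)} (hΦ : feasible s Φ) (d : Fin m) :
    (univ.filter fun i => Φ i = some d).card ≤ s d := hΦ d

end zvalBasics

section submod

variable {α : Fin m → ℕ} {pos : Fin n → Fin m ≃ Fin m}

lemma capOf_mem {K : ℕ} {S : Finset (Fin m)} {d : Fin m} (h : d ∈ S) :
    capOf (m := m) K n S d = (n + K - 1) / K := if_pos h

lemma capOf_notMem {K : ℕ} {S : Finset (Fin m)} {d : Fin m} (h : d ∉ S) :
    capOf (m := m) K n S d = 0 := if_neg h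

lemma zval_submod (K : ℕ) (α : Fin m → ℕ) (pos : Fin n → Fin m ≃ Fin m)
    (W : Finset (Fin m)) {a b : Fin m} (ha : a ∉ W) (hb : b ∉ W) (hab : a ≠ b) :
    zval α pos univ (capOf K n (insert a (insert b W))) + zval α pos univ (capOf K n W)
      ≤ zval α pos univ (capOf K n (insert a W)) + zval α pos univ (capOf K n (insert b W)) := by
  classical
  obtain ⟨Φ₁, hf1, hv1⟩ := zval_exists α pos univ (capOf K n (insert a (insert b W)))
  obtain ⟨Φ₂, hf2, hv2⟩ := zval_exists α pos univ (capOf K n W)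
  have hba : b ≠ a := hab.symm
  have hbaW : b ∉ insert a W := by simp [hba, hb]
  have haW : a ∉ insert b W := by simp [hab, ha]
  have hΦ₂a : ∀ x, Φ₂ x ≠ some a := feasible_notMem hf2 (capOf_notMem ha)
  have hΦ₂b : ∀ x, Φ₂ x ≠ some b := feasible_notMem hf2 (capOf_notMem hb)
  set γ : Fin n → Prop := fun i => ¬ sig Φ₁ Φ₂ b i with hγdef
  have hγ : ∀ x j, prevFn Φ₁ Φ₂ x = some j → (γ x ↔ γ j) :=
    fun x j h => not_congr (sig_prev hΦ₂b h)
  set Ψa : Fin n → Option (Fin m) := fun i => if γ i then Φ₁ i else Φ₂ i with hΨa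
  set Ψb : Fin n → Option (Fin m) := fun i => if γ i then Φ₂ i else Φ₁ i with hΨb
  have hmemA : ∀ (i : Fin n) (d : Fin m), Ψa i = some d
      ↔ (γ i ∧ Φ₁ i = some d) ∨ (¬ γ i ∧ Φ₂ i = some d) := by
    intro i d
    rw [hΨa]
    dsimp only
    by_cases h : γ i
    · rw [if_pos h]; tauto
    · rw [if_neg h]; tauto
  have hmemB : ∀ (i : Fin n) (d : Fin m), Ψb i = some d
      ↔ ((¬ γ i) ∧ Φ₁ i = some d) ∨ (¬ ¬ γ i ∧ Φ₂ i = some d) := by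
    intro i d
    rw [hΨb]
    dsimp only
    by_cases h : γ i
    · rw [if_pos h]; tauto
    · rw [if_neg h]; tauto
  -- feasibility of Ψa for insert a W
  have feaa : feasible (capOf K n (insert a W)) Ψa := by
    intro d
    by_cases hda : d = a
    · subst hda
      rw [capOf_mem (Finset.mem_insert_self _ _)]
      have hsub : (univ.filter fun i => Ψa i = some d)
          ⊆ univ.filter fun i => Φ₁ i = some d := by
        intro i hi
        rw [Finset.mem_filter] at hi ⊢
        rcases (hmemA i d).1 hi.2 with ⟨-, h1⟩ | ⟨-, h2⟩
        · exact ⟨hi.1, h1⟩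
        · exact absurd h2 (hΦ₂a i)
      refine le_trans (Finset.card_le_card hsub) ?_
      have := hf1 d
      rwa [capOf_mem (Finset.mem_insert_self _ _)] at this
    · by_cases hdb : d = b
      · subst hdb
        rw [capOf_notMem hbaW, Nat.le_zero, Finset.card_eq_zero,
          Finset.filter_eq_empty_iff]
        intro i _ hi
        rcases (hmemA i d).1 hi with ⟨hg, h1⟩ | ⟨-, h2⟩
        · exact hg (sig_self h1)
        · exact hΦ₂b i h2
      · by_cases hdW : d ∈ W
        · rw [capOf_mem (Finset.mem_insert_of_mem hdW)]
          refine le_trans (count_le Φ₁ Φ₂ γ hγ d _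
            (fun i => by rw [Finset.mem_filter]
                         exact ⟨fun hh => (hmemA i d).1 hh.2,
                           fun hh => ⟨Finset.mem_univ _, (hmemA i d).2 hh⟩⟩))
            (max_le ?_ ?_)
          · have := hf1 d
            rwa [capOf_mem (by simp [hdW])] at this
          · have := hf2 d
            rwa [capOf_mem hdW] at this
        · have hd1 : d ∉ insert a (insert b W) := by simp [hda, hdb, hdW]
          have hd2 : d ∉ insert a W := by simp [hda, hdW]
          rw [capOf_notMem hd2, Nat.le_zero, Finset.card_eq_zero,
            Finset.filter_eq_empty_iff]
          intro i _ hi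
          rcases (hmemA i d).1 hi with ⟨-, h1⟩ | ⟨-, h2⟩
          · exact feasible_notMem hf1 (capOf_notMem hd1) i h1
          · exact feasible_notMem hf2 (capOf_notMem hdW) i h2
  -- feasibility of Ψb for insert b W
  have feab : feasible (capOf K n (insert b W)) Ψb := by
    intro d
    by_cases hdb : d = b
    · subst hdb
      rw [capOf_mem (Finset.mem_insert_self _ _)]
      have hsub : (univ.filter fun i => Ψb i = some d)
          ⊆ univ.filter fun i => Φ₁ i = some d := by
        intro i hi
        rw [Finset.mem_filter] at hi ⊢
        rcases (hmemB i d).1 hi.2 with ⟨-, h1⟩ | ⟨-, h2⟩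
        · exact ⟨hi.1, h1⟩
        · exact absurd h2 (hΦ₂b i)
      refine le_trans (Finset.card_le_card hsub) ?_
      have := hf1 d
      rwa [capOf_mem (by simp)] at this
    · by_cases hda : d = a
      · subst hda
        rw [capOf_notMem haW, Nat.le_zero, Finset.card_eq_zero,
          Finset.filter_eq_empty_iff]
        intro i _ hi
        rcases (hmemB i d).1 hi with ⟨hg, h1⟩ | ⟨hg, h2⟩
        · exact hg (not_sig_of_start h1 hΦ₂a hab)
        · exact hΦ₂a i h2
      · by_cases hdW : d ∈ W
        · rw [capOf_mem (Finset.mem_insert_of_mem hdW)]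
          refine le_trans (count_le Φ₁ Φ₂ (fun i => ¬ γ i)
            (fun x j h => not_congr (hγ x j h)) d _
            (fun i => by rw [Finset.mem_filter]
                         exact ⟨fun hh => (hmemB i d).1 hh.2,
                           fun hh => ⟨Finset.mem_univ _, (hmemB i d).2 hh⟩⟩))
            (max_le ?_ ?_)
          · have := hf1 d
            rwa [capOf_mem (by simp [hdW])] at this
          · have := hf2 d
            rwa [capOf_mem hdW] at this
        · have hd1 : d ∉ insert a (insert b W) := by simp [hda, hdb, hdW]
          have hd2 : d ∉ insert b W := by simp [hdb, hdW]
          rw [capOf_notMem hd2, Nat.le_zero, Finset.card_eq_zero,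
            Finset.filter_eq_empty_iff]
          intro i _ hi
          rcases (hmemB i d).1 hi with ⟨-, h1⟩ | ⟨-, h2⟩
          · exact feasible_notMem hf1 (capOf_notMem hd1) i h1
          · exact feasible_notMem hf2 (capOf_notMem hdW) i h2
  have hsum : satisf α pos univ Ψa + satisf α pos univ Ψb
      = satisf α pos univ Φ₁ + satisf α pos univ Φ₂ := by
    unfold satisf
    rw [← Finset.sum_add_distrib, ← Finset.sum_add_distrib]
    apply Finset.sum_congr rfl
    intro i _
    rw [hΨa, hΨb]
    dsimp only
    by_cases h : γ i
    · rw [if_pos h, if_pos h]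
    · rw [if_neg h, if_neg h, add_comm]
  calc zval α pos univ (capOf K n (insert a (insert b W))) + zval α pos univ (capOf K n W)
      = satisf α pos univ Ψa + satisf α pos univ Ψb := by rw [hsum, hv1, hv2]
    _ ≤ zval α pos univ (capOf K n (insert a W)) + zval α pos univ (capOf K n (insert b W)) :=
        add_le_add (le_zval feaa) (le_zval feab)

end submod

section greedy

lemma zval_marg (K : ℕ) (α : Fin m → ℕ) (pos : Fin n → Fin m ≃ Fin m)
    (V : Finset (Fin m)) :
    ∀ (T : Finset (Fin m)) (a : Fin m),
    zval α pos univ (capOf K n (insert a (T ∪ V))) + zval α pos univ (capOf K n T)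
      ≤ zval α pos univ (capOf K n (T ∪ V)) + zval α pos univ (capOf K n (insert a T)) := by
  classical
  induction V using Finset.induction_on with
  | empty =>
    intro T a
    rw [Finset.union_empty, add_comm]
  | @insert c V hcV ih =>
    intro T a
    rw [Finset.union_insert]
    by_cases hcW : c ∈ T ∪ V
    · rw [Finset.insert_eq_self.2 hcW]
      exact ih T a
    · by_cases haW : a ∈ T ∪ V
      · have h1 : insert a (insert c (T ∪ V)) = insert c (T ∪ V) := by
          rw [Finset.insert_eq_self]
          exact Finset.mem_insert_of_mem haW
        rw [h1]
        exact add_le_add le_rfl (zval_mono_set (Finset.subset_insert a T))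
      · by_cases hac : a = c
        · subst hac
          have h1 : insert a (insert a (T ∪ V)) = insert a (T ∪ V) := by simp
          rw [h1]
          exact add_le_add le_rfl (zval_mono_set (Finset.subset_insert a T))
        · have hsub := zval_submod (n := n) K α pos (T ∪ V) haW hcW hac
          have hih := ih T a
          omega

lemma zval_sum_marg (K : ℕ) (α : Fin m → ℕ) (pos : Fin n → Fin m ≃ Fin m)
    (T : Finset (Fin m)) (S' : Finset (Fin m)) :
    zval α pos univ (capOf K n (T ∪ S')) + S'.card * zval α pos univ (capOf K n T)
      ≤ zval α pos univ (capOf K n T)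
        + ∑ a ∈ S', zval α pos univ (capOf K n (insert a T)) := by
  classical
  induction S' using Finset.induction_on with
  | empty => simp [Finset.union_empty]
  | @insert b S' hbS ih =>
    rw [Finset.union_insert, Finset.sum_insert hbS, Finset.card_insert_of_notMem hbS,
      add_one_mul]
    have hM := zval_marg (n := n) K α pos S' T b
    omega

end greedy

end GMaux

open GMaux in
/-- Algorithm GM (greedy) is a (1 − 1/e)-approximation algorithm for
the α-Monroe election problem, for every positional scoring function α.
`Sg j` is the set built by the greedy procedure after `j` iterations. -/
theorem gm_is_one_minus_inv_e_approximation_for_monroe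
    {m n K : ℕ} (hK : 0 < K) (hKm : K ≤ m)
    (α : Fin m → ℕ) (hα0 : ∀ i : Fin m, (i : ℕ) + 1 = m → α i = 0)
    (hαmono : ∀ i j : Fin m, i ≤ j → α j ≤ α i)
    (pos : Fin n → Fin m ≃ Fin m)
    (Sg : ℕ → Finset (Fin m)) (h0 : Sg 0 = ∅)
    (hstep : ∀ j, j < K → ∃ a ∉ Sg j,
        Sg (j + 1) = insert a (Sg j) ∧
        ∀ b ∉ Sg j,
          zval α pos Finset.univ (capOf K n (insert b (Sg j))) ≤
            zval α pos Finset.univ (capOf K n (insert a (Sg j)))) :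
    ∀ S : Finset (Fin m), S.card = K →
      (1 - 1 / Real.exp 1) * (zval α pos Finset.univ (capOf K n S) : ℝ) ≤
        (zval α pos Finset.univ (capOf K n (Sg K)) : ℝ) := by
  intro S hS
  classical
  set O : ℕ := zval α pos Finset.univ (capOf K n S) with hO
  have hSne : S.Nonempty := by
    rw [← Finset.card_pos, hS]; exact hK
  -- the greedy step inequality, in ℕ
  have key : ∀ j, j < K →
      O + K * zval α pos Finset.univ (capOf K n (Sg j))
        ≤ zval α pos Finset.univ (capOf K n (Sg j))
          + K * zval α pos Finset.univ (capOf K n (Sg (j + 1))) := by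
    intro j hj
    obtain ⟨astar, hastar, hSg1, hmax⟩ := hstep j hj
    have hteam : O + K * zval α pos Finset.univ (capOf K n (Sg j))
        ≤ zval α pos Finset.univ (capOf K n (Sg j))
          + ∑ a ∈ S, zval α pos Finset.univ (capOf K n (insert a (Sg j))) := by
      have h1 : O ≤ zval α pos Finset.univ (capOf K n (Sg j ∪ S)) :=
        zval_mono_set Finset.subset_union_right
      have h2 := zval_sum_marg (n := n) K α pos (Sg j) S
      rw [hS] at h2
      omega
    obtain ⟨a0, ha0S, ha0⟩ : ∃ a ∈ S, O + K * zval α pos Finset.univ (capOf K n (Sg j))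
        ≤ zval α pos Finset.univ (capOf K n (Sg j))
          + K * zval α pos Finset.univ (capOf K n (insert a (Sg j))) := by
      by_contra hcon
      push_neg at hcon
      have hlt := Finset.sum_lt_sum_of_nonempty hSne (fun a haS => hcon a haS)
      rw [Finset.sum_const, hS, smul_eq_mul] at hlt
      have hL : ∑ a ∈ S, (zval α pos Finset.univ (capOf K n (Sg j))
            + K * zval α pos Finset.univ (capOf K n (insert a (Sg j))))
          = K * zval α pos Finset.univ (capOf K n (Sg j))
            + K * ∑ a ∈ S, zval α pos Finset.univ (capOf K n (insert a (Sg j))) := by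
        rw [Finset.sum_add_distrib, Finset.sum_const, hS, ← Finset.mul_sum, smul_eq_mul]
      rw [hL] at hlt
      have h3 := Nat.mul_le_mul_left K hteam
      rw [Nat.mul_add, Nat.mul_add] at h3
      have h6 := Nat.mul_add K O (K * zval α pos Finset.univ (capOf K n (Sg j)))
      rw [h6] at hlt
      omega
    by_cases hmem : a0 ∈ Sg j
    · rw [Finset.insert_eq_self.2 hmem] at ha0
      have hmono : zval α pos Finset.univ (capOf K n (Sg j))
          ≤ zval α pos Finset.univ (capOf K n (Sg (j + 1))) := by
        rw [hSg1]
        exact zval_mono_set (Finset.subset_insert _ _)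
      have h4 := Nat.mul_le_mul_left K hmono
      omega
    · have hle := hmax a0 hmem
      have heq : zval α pos Finset.univ (capOf K n (insert astar (Sg j)))
          = zval α pos Finset.univ (capOf K n (Sg (j + 1))) := by rw [hSg1]
      rw [heq] at hle
      have h4 := Nat.mul_le_mul_left K hle
      omega
  -- the analytic part, in ℝ
  set q : ℝ := 1 - 1 / (K : ℝ) with hqdef
  have hKpos : (0 : ℝ) < K := by exact_mod_cast hK
  have hK1 : (1 : ℝ) ≤ K := by exact_mod_cast hK
  have hq0 : 0 ≤ q := by
    rw [hqdef, sub_nonneg]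
    exact div_le_one_of_le₀ hK1 (le_of_lt hKpos)
  have hrec : ∀ j, j < K →
      (O : ℝ) - (zval α pos Finset.univ (capOf K n (Sg (j + 1))) : ℝ)
        ≤ q * ((O : ℝ) - (zval α pos Finset.univ (capOf K n (Sg j)) : ℝ)) := by
    intro j hj
    have h := key j hj
    have h' : (O : ℝ) + (K : ℝ) * (zval α pos Finset.univ (capOf K n (Sg j)) : ℝ)
        ≤ (zval α pos Finset.univ (capOf K n (Sg j)) : ℝ)
          + (K : ℝ) * (zval α pos Finset.univ (capOf K n (Sg (j + 1))) : ℝ) := by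
      exact_mod_cast h
    have hqe : q = ((K : ℝ) - 1) / K := by
      rw [hqdef]
      field_simp
    rw [hqe, div_mul_eq_mul_div, le_div_iff₀ hKpos]
    nlinarith [h']
  have hind : ∀ j, j ≤ K →
      (O : ℝ) - (zval α pos Finset.univ (capOf K n (Sg j)) : ℝ) ≤ q ^ j * O := by
    intro j
    induction j with
    | zero =>
      intro _
      have h1 : (0 : ℝ) ≤ (zval α pos Finset.univ (capOf K n (Sg 0)) : ℝ) :=
        Nat.cast_nonneg _
      simp only [pow_zero, one_mul]
      linarith
    | succ j ih =>
      intro hjK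
      have hj : j < K := lt_of_lt_of_le (Nat.lt_succ_self j) hjK
      calc (O : ℝ) - (zval α pos Finset.univ (capOf K n (Sg (j + 1))) : ℝ)
          ≤ q * ((O : ℝ) - (zval α pos Finset.univ (capOf K n (Sg j)) : ℝ)) := hrec j hj
        _ ≤ q * (q ^ j * O) := mul_le_mul_of_nonneg_left (ih (le_of_lt hj)) hq0
        _ = q ^ (j + 1) * O := by ring
  have hfinal := hind K le_rfl
  have hqK : q ^ K ≤ Real.exp (-1) := by
    have h1 : q ≤ Real.exp (-(1 / (K : ℝ))) := by
      have h2 := Real.add_one_le_exp (-(1 / (K : ℝ)))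
      rw [hqdef]
      linarith
    calc q ^ K ≤ (Real.exp (-(1 / (K : ℝ)))) ^ K := pow_le_pow_left₀ hq0 h1 K
      _ = Real.exp ((K : ℝ) * (-(1 / (K : ℝ)))) := by rw [← Real.exp_nat_mul]
      _ = Real.exp (-1) := by
          congr 1
          field_simp
  have hO0 : (0 : ℝ) ≤ (O : ℝ) := Nat.cast_nonneg _
  have hlast : (O : ℝ) - (zval α pos Finset.univ (capOf K n (Sg K)) : ℝ)
      ≤ Real.exp (-1) * O :=
    le_trans hfinal (mul_le_mul_of_nonneg_right hqK hO0)
  have hexp : Real.exp (-1) = 1 / Real.exp 1 := by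
    rw [Real.exp_neg, one_div]
  rw [hexp] at hlast
  have hgoal : (1 - 1 / Real.exp 1) * (O : ℝ)
      = (O : ℝ) - (1 / Real.exp 1) * O := by ring
  rw [hO] at *
  linarith [hlast, hgoal]
end

section
/- Let A be a set of m alternatives, N = {1,…,n} a set of agents each with a linear preference order over A, α an m-candidate positional scoring function, and K a positive integer with K ≤ m. The set function z is submodular: for all subsets S, T of A with S ⊆ T and every alternative a ∉ T, it holds that z(S ∪ {a}) − z(S) ≥ z(T ∪ {a}) − z(T) (equivalently, z(S ∪ {a}) + z(T) ≥ z(T ∪ {a}) + z(S)), where z(S) is the maximum total α-satisfaction of a partial assignment of the agents to alternatives in S in which each alternative of S represents at most ⌈n/K⌉ agents. -/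
open Finset

namespace ZSubAux

variable {m n : ℕ}

/-- Number of agents assigned to `v` by `f`. -/
def cnt (f : Fin n → Option (Fin m)) (v : Fin m) : ℕ :=
  (univ.filter (fun i => f i = some v)).card

lemma feasible_iff (s : Fin m → ℕ) (f : Fin n → Option (Fin m)) :
    feasible s f ↔ ∀ v, cnt f v ≤ s v := Iff.rfl

/-- Assignment taking `Φ` on `X` and `Ψ` off `X`. -/
def redMap (Φ Ψ : Fin n → Option (Fin m)) (X : Finset (Fin n)) : Fin n → Option (Fin m) :=
  fun i => if i ∈ X then Φ i else Ψ i

/-- Assignment taking `Ψ` on `X` and `Φ` off `X`. -/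
def blueMap (Φ Ψ : Fin n → Option (Fin m)) (X : Finset (Fin n)) : Fin n → Option (Fin m) :=
  fun i => if i ∈ X then Ψ i else Φ i

lemma cnt_update (f : Fin n → Option (Fin m)) (i : Fin n) (w : Option (Fin m)) (v : Fin m) :
    cnt (Function.update f i w) v + (if f i = some v then 1 else 0)
      = cnt f v + (if w = some v then 1 else 0) := by
  classical
  unfold cnt
  rw [Finset.card_filter, Finset.card_filter,
    ← Finset.add_sum_erase _ _ (mem_univ i), ← Finset.add_sum_erase _ _ (mem_univ i)]
  have hsum : ∑ j ∈ univ.erase i, (if Function.update f i w j = some v then 1 else 0)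
      = ∑ j ∈ univ.erase i, (if f j = some v then 1 else 0) := by
    refine Finset.sum_congr rfl fun j hj => ?_
    rw [Function.update_of_ne (Finset.ne_of_mem_erase hj)]
  rw [hsum, Function.update_self]
  ring

lemma red_add_blue (Φ Ψ : Fin n → Option (Fin m)) (X : Finset (Fin n)) (v : Fin m) :
    cnt (redMap Φ Ψ X) v + cnt (blueMap Φ Ψ X) v = cnt Φ v + cnt Ψ v := by
  classical
  unfold cnt redMap blueMap
  rw [Finset.card_filter, Finset.card_filter, Finset.card_filter, Finset.card_filter,
    ← Finset.sum_add_distrib, ← Finset.sum_add_distrib]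
  refine Finset.sum_congr rfl fun i _ => ?_
  by_cases h : i ∈ X <;> simp [h, add_comm]

lemma blueMap_insert (Φ Ψ : Fin n → Option (Fin m)) (X : Finset (Fin n)) (i : Fin n) :
    blueMap Φ Ψ (insert i X) = Function.update (blueMap Φ Ψ X) i (Ψ i) := by
  funext j
  rcases eq_or_ne j i with h | h
  · subst h; simp [blueMap, Function.update_self]
  · rw [Function.update_of_ne h]
    simp [blueMap, Finset.mem_insert, h]

lemma redMap_insert (Φ Ψ : Fin n → Option (Fin m)) (X : Finset (Fin n)) (i : Fin n) :
    redMap Φ Ψ (insert i X) = Function.update (redMap Φ Ψ X) i (Φ i) := by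
  funext j
  rcases eq_or_ne j i with h | h
  · subst h; simp [redMap, Function.update_self]
  · rw [Function.update_of_ne h]
    simp [redMap, Finset.mem_insert, h]

/-- If the blue count at `y` exceeds what `Ψ` alone could give, some agent outside `X`
has `Φ`-value `y`. -/
lemma exists_unswapped (Φ Ψ : Fin n → Option (Fin m)) (X : Finset (Fin n)) (y : Fin m)
    (h : cnt Ψ y < cnt (blueMap Φ Ψ X) y) :
    ∃ i, i ∉ X ∧ Φ i = some y := by
  classical
  by_contra hno
  push_neg at hno
  have hsub : univ.filter (fun i => blueMap Φ Ψ X i = some y)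
      ⊆ univ.filter (fun i => Ψ i = some y) := by
    intro i hi
    rw [Finset.mem_filter] at hi ⊢
    refine ⟨mem_univ i, ?_⟩
    by_cases hX : i ∈ X
    · simpa [blueMap, hX] using hi.2
    · exact absurd (by simpa [blueMap, hX] using hi.2) (hno i hX)
  have := Finset.card_le_card hsub
  exact absurd this (by unfold cnt at h; omega)

/-- The alternating exchange process. -/
lemma exchange (s t : Fin m → ℕ) (hst : ∀ v, s v ≤ t v) (b : Fin m)
    (Φ Ψ : Fin n → Option (Fin m))
    (hΦ : ∀ v, cnt Φ v ≤ t v + if v = b then 1 else 0)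
    (hΨ : ∀ v, cnt Ψ v ≤ s v) :
    ∀ (k : ℕ) (X : Finset (Fin n)) (y : Fin m),
      Xᶜ.card ≤ k →
      (∀ v, cnt (blueMap Φ Ψ X) v ≤ t v + if v = y then 1 else 0) →
      (∀ v, cnt (redMap Φ Ψ X) v ≤ s v + if v = b then 1 else 0) →
      ∃ X', (∀ v, cnt (redMap Φ Ψ X') v ≤ s v + if v = b then 1 else 0) ∧
            (∀ v, cnt (blueMap Φ Ψ X') v ≤ t v) := by
  intro k
  induction k with
  | zero =>
    intro X y hcard hblue hred
    have hXuniv : X = univ := by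
      have : Xᶜ = ∅ := Finset.card_eq_zero.mp (Nat.le_zero.mp hcard)
      simpa [Finset.compl_eq_empty_iff] using this
    refine ⟨X, hred, fun v => ?_⟩
    subst hXuniv
    have : cnt (blueMap Φ Ψ univ) v = cnt Ψ v := by
      unfold cnt blueMap; simp
    rw [this]
    exact le_trans (hΨ v) (hst v)
  | succ k ih =>
    intro X y hcard hblue hred
    by_cases hy : cnt (blueMap Φ Ψ X) y ≤ t y
    · refine ⟨X, hred, fun v => ?_⟩
      rcases eq_or_ne v y with h | h
      · subst h; exact hy
      · have := hblue v; simpa [h] using this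
    -- blue is violated at y, by exactly one
    · push_neg at hy
      have hΨy : cnt Ψ y < cnt (blueMap Φ Ψ X) y :=
        lt_of_le_of_lt (le_trans (hΨ y) (hst y)) hy
      obtain ⟨i, hiX, hΦi⟩ := exists_unswapped Φ Ψ X y hΨy
      have hbXi : blueMap Φ Ψ X i = some y := by simp [blueMap, hiX, hΦi]
      have hrXi : redMap Φ Ψ X i = Ψ i := by simp [redMap, hiX]
      have hbluey : cnt (blueMap Φ Ψ X) y = t y + 1 := by
        have := hblue y; simp at this; omega
      -- the red invariant gains a unit at y, which is affordable:
      have hredy1 : cnt (redMap Φ Ψ X) y + 1 ≤ s y + if y = b then 1 else 0 := by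
        have hsum := red_add_blue Φ Ψ X y
        have h1 := hΦ y
        have h2 := hΨ y
        omega
      -- update lemmas at the new set `insert i X`
      have hBu : ∀ v, cnt (blueMap Φ Ψ (insert i X)) v + (if y = v then 1 else 0)
          = cnt (blueMap Φ Ψ X) v + (if Ψ i = some v then 1 else 0) := by
        intro v
        have h := cnt_update (blueMap Φ Ψ X) i (Ψ i) v
        rw [hbXi] at h
        simp only [Option.some.injEq] at h
        rw [blueMap_insert]
        exact h
      have hRu : ∀ v, cnt (redMap Φ Ψ (insert i X)) v + (if Ψ i = some v then 1 else 0)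
          = cnt (redMap Φ Ψ X) v + (if y = v then 1 else 0) := by
        intro v
        have h := cnt_update (redMap Φ Ψ X) i (Φ i) v
        rw [hrXi, hΦi] at h
        simp only [Option.some.injEq] at h
        rw [redMap_insert, hΦi]
        exact h
      have hred' : ∀ v, cnt (redMap Φ Ψ (insert i X)) v ≤ s v + if v = b then 1 else 0 := by
        intro v
        have h := hRu v
        have hr := hred v
        rcases eq_or_ne y v with hv | hv
        · have hr1 := hredy1
          rw [hv] at hr1
          rw [if_pos hv] at h
          rcases eq_or_ne (Ψ i) (some v) with hp | hp
          · rw [if_pos hp] at h; omega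
          · rw [if_neg hp] at h; omega
        · rw [if_neg hv] at h
          rcases eq_or_ne (Ψ i) (some v) with hp | hp
          · rw [if_pos hp] at h; omega
          · rw [if_neg hp] at h; omega
      have hcard' : (insert i X)ᶜ.card ≤ k := by
        rw [Finset.compl_insert, Finset.card_erase_of_mem (by simpa using hiX)]
        have hpos : 0 < Xᶜ.card := Finset.card_pos.mpr ⟨i, by simpa using hiX⟩
        omega
      cases hΨi : Ψ i with
      | none =>
        refine ⟨insert i X, hred', fun v => ?_⟩
        have h := hBu v
        rw [hΨi] at h
        rw [if_neg (by simp : (none : Option (Fin m)) ≠ some v)] at h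
        have hb := hblue v
        rcases eq_or_ne y v with hv | hv
        · have hb1 := hbluey
          rw [hv] at hb1
          rw [if_pos hv] at h
          omega
        · rw [if_neg hv] at h
          rw [if_neg (fun hh => hv hh.symm)] at hb
          omega
      | some y' =>
        refine ih (insert i X) y' hcard' ?_ hred'
        intro v
        have h := hBu v
        rw [hΨi] at h
        simp only [Option.some.injEq] at h
        have hb := hblue v
        rcases eq_or_ne y v with hv | hv
        · have hb1 := hbluey
          rw [hv] at hb1
          rw [if_pos hv] at h
          rcases eq_or_ne y' v with hv' | hv'
          · rw [if_pos hv'] at h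
            rw [if_pos hv'.symm]
            omega
          · rw [if_neg hv'] at h
            rw [if_neg (fun hh => hv' hh.symm)]
            omega
        · rw [if_neg hv] at h
          rw [if_neg (fun hh => hv hh.symm)] at hb
          rcases eq_or_ne y' v with hv' | hv'
          · rw [if_pos hv'] at h
            rw [if_pos hv'.symm]
            omega
          · rw [if_neg hv'] at h
            rw [if_neg (fun hh => hv' hh.symm)]
            omega

lemma satisf_red_blue (α : Fin m → ℕ) (pos : Fin n → Fin m ≃ Fin m)
    (Φ Ψ : Fin n → Option (Fin m)) (X : Finset (Fin n)) :
    satisf α pos univ (redMap Φ Ψ X) + satisf α pos univ (blueMap Φ Ψ X)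
      = satisf α pos univ Φ + satisf α pos univ Ψ := by
  unfold satisf
  rw [← Finset.sum_add_distrib, ← Finset.sum_add_distrib]
  refine Finset.sum_congr rfl fun i _ => ?_
  by_cases h : i ∈ X <;> simp [redMap, blueMap, h, add_comm]

lemma le_zval (α : Fin m → ℕ) (pos : Fin n → Fin m ≃ Fin m) (s : Fin m → ℕ)
    (Φ : Fin n → Option (Fin m)) (h : feasible s Φ) :
    satisf α pos univ Φ ≤ zval α pos univ s :=
  Finset.le_sup (by simp [h])

lemma exists_opt (α : Fin m → ℕ) (pos : Fin n → Fin m ≃ Fin m) (s : Fin m → ℕ) :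
    ∃ Φ, feasible s Φ ∧ satisf α pos univ Φ = zval α pos univ s := by
  classical
  have hne : (univ.filter (fun Φ : Fin n → Option (Fin m) => feasible s Φ)).Nonempty := by
    refine ⟨fun _ => none, ?_⟩
    simp only [Finset.mem_filter, Finset.mem_univ, true_and]
    intro a
    simp
  obtain ⟨Φ, hΦ, h⟩ := Finset.exists_mem_eq_sup _ hne (satisf α pos (univ : Finset (Fin n)))
  exact ⟨Φ, (Finset.mem_filter.mp hΦ).2, h.symm⟩

/-- Unit-increment submodularity of `zval` in the capacity function. -/
lemma zval_unit (α : Fin m → ℕ) (pos : Fin n → Fin m ≃ Fin m)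
    (s t : Fin m → ℕ) (hst : ∀ v, s v ≤ t v) (b : Fin m) :
    zval α pos univ (fun v => t v + if v = b then 1 else 0) + zval α pos univ s
      ≤ zval α pos univ (fun v => s v + if v = b then 1 else 0) + zval α pos univ t := by
  classical
  obtain ⟨Φ, hΦf, hΦv⟩ := exists_opt α pos (fun v => t v + if v = b then 1 else 0)
  obtain ⟨Ψ, hΨf, hΨv⟩ := exists_opt α pos s
  obtain ⟨X, hred, hblue⟩ := exchange s t hst b Φ Ψ hΦf hΨf n ∅ b
    (le_trans (Finset.card_le_univ _) (by simp))
    (by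
      intro v
      have : cnt (blueMap Φ Ψ ∅) v = cnt Φ v := by unfold cnt blueMap; simp
      rw [this]; exact hΦf v)
    (by
      intro v
      have : cnt (redMap Φ Ψ ∅) v = cnt Ψ v := by unfold cnt redMap; simp
      rw [this]; exact le_trans (hΨf v) (Nat.le_add_right _ _))
  have h1 : satisf α pos univ (redMap Φ Ψ X)
      ≤ zval α pos univ (fun v => s v + if v = b then 1 else 0) :=
    le_zval _ _ _ _ hred
  have h2 : satisf α pos univ (blueMap Φ Ψ X) ≤ zval α pos univ t :=
    le_zval _ _ _ _ hblue
  have h3 := satisf_red_blue α pos Φ Ψ X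
  omega

/-- Multi-increment submodularity of `zval` in the capacity function. -/
lemma zval_multi (α : Fin m → ℕ) (pos : Fin n → Fin m ≃ Fin m)
    (s t : Fin m → ℕ) (hst : ∀ v, s v ≤ t v) (b : Fin m) (c : ℕ) :
    zval α pos univ (fun v => t v + c * if v = b then 1 else 0) + zval α pos univ s
      ≤ zval α pos univ (fun v => s v + c * if v = b then 1 else 0) + zval α pos univ t := by
  induction c with
  | zero =>
    have h1 : (fun v => t v + 0 * if v = b then 1 else 0) = t := by funext v; ring
    have h2 : (fun v => s v + 0 * if v = b then 1 else 0) = s := by funext v; ring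
    rw [h1, h2, Nat.add_comm]
  | succ c ih =>
    have hst' : ∀ v, (s v + c * if v = b then 1 else 0) ≤ (t v + c * if v = b then 1 else 0) :=
      fun v => by have := hst v; omega
    have hu := zval_unit α pos (fun v => s v + c * if v = b then 1 else 0)
      (fun v => t v + c * if v = b then 1 else 0) hst' b
    have e1 : (fun v => (t v + c * if v = b then 1 else 0) + if v = b then 1 else 0)
        = (fun v => t v + (c + 1) * if v = b then 1 else 0) := by funext v; ring
    have e2 : (fun v => (s v + c * if v = b then 1 else 0) + if v = b then 1 else 0)
        = (fun v => s v + (c + 1) * if v = b then 1 else 0) := by funext v; ring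
    rw [e1, e2] at hu
    omega

end ZSubAux

/-- The set function `z` is submodular: for S ⊆ T and a ∉ T,
z(S ∪ {a}) + z(T) ≥ z(T ∪ {a}) + z(S). -/
theorem zset_submodular
    {m n K : ℕ} (hK : 0 < K) (hKm : K ≤ m)
    (α : Fin m → ℕ) (hα0 : ∀ i : Fin m, (i : ℕ) + 1 = m → α i = 0)
    (hαmono : ∀ i j : Fin m, i ≤ j → α j ≤ α i)
    (pos : Fin n → Fin m ≃ Fin m)
    (S T : Finset (Fin m)) (hST : S ⊆ T) (a : Fin m) (ha : a ∉ T) :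
    zval α pos Finset.univ (capOf K n (insert a T)) +
        zval α pos Finset.univ (capOf K n S) ≤
      zval α pos Finset.univ (capOf K n (insert a S)) +
        zval α pos Finset.univ (capOf K n T) := by
  classical
  set c : ℕ := (n + K - 1) / K with hc
  have haS : a ∉ S := fun h => ha (hST h)
  have hinsert : ∀ (U : Finset (Fin m)), a ∉ U →
      capOf K n (insert a U) = (fun v => capOf K n U v + c * if v = a then 1 else 0) := by
    intro U hU
    funext v
    rcases eq_or_ne v a with h | h
    · subst h
      simp [capOf, hU, hc]
    · simp [capOf, Finset.mem_insert, h]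
  have hst : ∀ v, capOf K n S v ≤ capOf K n T v := by
    intro v
    by_cases h : v ∈ S
    · simp [capOf, h, hST h]
    · simp [capOf, h]
  have := ZSubAux.zval_multi α pos (capOf K n S) (capOf K n T) hst a c
  rw [hinsert S haS, hinsert T ha]
  exact this
end

section
/- Let A be a set of m alternatives, N = {1,…,n} a set of agents each with a linear preference order over A, and α an m-candidate positional scoring function. Let t : A → ℕ be a capacity function and let Φ be a partial assignment feasible for t that achieves the optimal satisfaction z_N(t). If Φ assigns to agent i a (non-null) alternative a_t, then z_N(t) = α(pos_i(a_t)) + z_{N \ {i}}(t \ {a_t}); that is, removing agent i together with one unit of capacity of its representative decomposes the optimal value. -/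
open Finset

/-- If Φ is an optimal partial assignment feasible for the capacity
function t and Φ assigns the (non-null) alternative `aT` to agent i, then
z_N(t) = α(pos_i(aT)) + z_{N∖{i}}(t ∖ {aT}). -/
theorem zcap_decompose_at_assigned_agent
    {m n : ℕ}
    (α : Fin m → ℕ) (hα0 : ∀ i : Fin m, (i : ℕ) + 1 = m → α i = 0)
    (hαmono : ∀ i j : Fin m, i ≤ j → α j ≤ α i)
    (pos : Fin n → Fin m ≃ Fin m)
    (t : Fin m → ℕ) (Φ : Fin n → Option (Fin m))
    (hfeas : feasible t Φ)
    (hopt : satisf α pos Finset.univ Φ = zval α pos Finset.univ t)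
    (i : Fin n) (aT : Fin m) (hΦi : Φ i = some aT) :
    zval α pos Finset.univ t =
      α (pos i aT) +
        zval α pos (Finset.univ.erase i) (Function.update t aT (t aT - 1)) := by
  classical
  set t' : Fin m → ℕ := Function.update t aT (t aT - 1) with ht'
  have hiT : i ∈ univ.filter (fun j => Φ j = some aT) := by simp [hΦi]
  have ht1 : 1 ≤ t aT := le_trans (Finset.card_pos.mpr ⟨i, hiT⟩) (hfeas aT)
  -- ≤ direction
  have hle : zval α pos Finset.univ t ≤
      α (pos i aT) + zval α pos (Finset.univ.erase i) t' := by
    set Φ' : Fin n → Option (Fin m) := Function.update Φ i none with hΦ'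
    have hfeas' : feasible t' Φ' := by
      intro a
      by_cases ha : a = aT
      · subst ha
        have hset : (univ.filter (fun j => Φ' j = some a)) =
            (univ.filter (fun j => Φ j = some a)).erase i := by
          ext j
          by_cases hj : j = i <;> simp [Φ', Function.update, hj]
        rw [hset, Finset.card_erase_of_mem hiT]
        have := hfeas a
        simp only [t', Function.update_self]
        omega
      · have hsub : (univ.filter (fun j => Φ' j = some a)) ⊆
            (univ.filter (fun j => Φ j = some a)) := by
          intro j hj
          simp only [mem_filter, mem_univ, true_and] at hj ⊢
          by_cases hji : j = i
          · subst hji; simp [Φ'] at hj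
          · simpa [Φ', Function.update, hji] using hj
        calc _ ≤ (univ.filter (fun j => Φ j = some a)).card :=
              Finset.card_le_card hsub
          _ ≤ t a := hfeas a
          _ = t' a := by simp [t', Function.update, ha]
    have hsum : satisf α pos Finset.univ Φ =
        α (pos i aT) + satisf α pos (Finset.univ.erase i) Φ' := by
      unfold satisf
      rw [← Finset.add_sum_erase _ _ (Finset.mem_univ i), hΦi]
      congr 1
      apply Finset.sum_congr rfl
      intro j hj
      have hji : j ≠ i := (Finset.mem_erase.mp hj).1
      simp [Φ', Function.update, hji]
    have hΦ'mem : Φ' ∈ univ.filter (fun Ψ : Fin n → Option (Fin m) => feasible t' Ψ) := by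
      simp [hfeas']
    calc zval α pos Finset.univ t = satisf α pos Finset.univ Φ := hopt.symm
      _ = α (pos i aT) + satisf α pos (Finset.univ.erase i) Φ' := hsum
      _ ≤ _ := by
          exact Nat.add_le_add_left (Finset.le_sup hΦ'mem) _
  -- ≥ direction
  have hne : (univ.filter (fun Ψ : Fin n → Option (Fin m) => feasible t' Ψ)).Nonempty := by
    refine ⟨fun _ => none, ?_⟩
    simp only [mem_filter, mem_univ, true_and]
    intro a
    simp [feasible]
  obtain ⟨Ψ, hΨmem, hΨeq⟩ := Finset.exists_mem_eq_sup _ hne (satisf α pos (Finset.univ.erase i))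
  have hΨfeas : feasible t' Ψ := (Finset.mem_filter.mp hΨmem).2
  have hge : α (pos i aT) + zval α pos (Finset.univ.erase i) t' ≤
      zval α pos Finset.univ t := by
    set Ψ' : Fin n → Option (Fin m) := Function.update Ψ i (some aT) with hΨ'
    have hfeas'' : feasible t Ψ' := by
      intro a
      by_cases ha : a = aT
      · subst ha
        have hsub : (univ.filter (fun j => Ψ' j = some a)) ⊆
            insert i (univ.filter (fun j => Ψ j = some a)) := by
          intro j hj
          simp only [mem_filter, mem_univ, true_and] at hj
          by_cases hji : j = i
          · simp [hji]
          · rw [show Ψ' j = Ψ j from Function.update_of_ne hji _ _] at hj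
            simp [hji, hj]
        have h1 : (univ.filter (fun j => Ψ j = some a)).card ≤ t a - 1 := by
          have := hΨfeas a
          simpa [t', Function.update] using this
        calc _ ≤ (insert i (univ.filter (fun j => Ψ j = some a))).card :=
              Finset.card_le_card hsub
          _ ≤ (univ.filter (fun j => Ψ j = some a)).card + 1 :=
              Finset.card_insert_le _ _
          _ ≤ t a := by omega
      · have hsub : (univ.filter (fun j => Ψ' j = some a)) ⊆
            (univ.filter (fun j => Ψ j = some a)) := by
          intro j hj
          simp only [mem_filter, mem_univ, true_and] at hj ⊢
          by_cases hji : j = i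
          · subst hji
            simp only [Ψ', Function.update_self] at hj
            exact absurd (Option.some.inj hj) (fun h => ha h.symm)
          · simpa [Ψ', Function.update, hji] using hj
        calc _ ≤ (univ.filter (fun j => Ψ j = some a)).card :=
              Finset.card_le_card hsub
          _ ≤ t' a := hΨfeas a
          _ = t a := by simp [t', Function.update, ha]
    have hsum : satisf α pos Finset.univ Ψ' =
        α (pos i aT) + satisf α pos (Finset.univ.erase i) Ψ := by
      unfold satisf
      rw [← Finset.add_sum_erase _ _ (Finset.mem_univ i)]
      have hi' : Ψ' i = some aT := by simp [Ψ']
      rw [hi']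
      congr 1
      apply Finset.sum_congr rfl
      intro j hj
      have hji : j ≠ i := (Finset.mem_erase.mp hj).1
      simp [Ψ', Function.update, hji]
    have hmem : Ψ' ∈ univ.filter (fun Θ : Fin n → Option (Fin m) => feasible t Θ) := by
      simp [hfeas'']
    calc α (pos i aT) + zval α pos (Finset.univ.erase i) t'
        = α (pos i aT) + satisf α pos (Finset.univ.erase i) Ψ := by rw [zval, hΨeq]
      _ = satisf α pos Finset.univ Ψ' := hsum.symm
      _ ≤ zval α pos Finset.univ t := Finset.le_sup hmem
  exact le_antisymm hle hge
end

section
/- Let A be a set of m alternatives, N = {1,…,n} a set of agents each with a linear preference order over A, and α an m-candidate positional scoring function. Let t : A → ℕ be a capacity function and let Φ be a partial assignment feasible for t achieving the optimal satisfaction z_N(t), with Φ(i) = a_t for some agent i and (non-null) alternative a_t. Then for every alternative a_s with t(a_s) ≥ 1, it holds that α(pos_i(a_t)) + z_{N \ {i}}(t \ {a_t}) ≥ α(pos_i(a_s)) + z_{N \ {i}}(t \ {a_s}). -/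
open Finset

/-- If Φ is an optimal partial assignment feasible for t with
Φ(i) = aT, then for every alternative aS with t(aS) ≥ 1,
α(pos_i(aT)) + z_{N∖{i}}(t ∖ {aT}) ≥ α(pos_i(aS)) + z_{N∖{i}}(t ∖ {aS}). -/
theorem zcap_optimal_assignment_exchange
    {m n : ℕ}
    (α : Fin m → ℕ) (hα0 : ∀ i : Fin m, (i : ℕ) + 1 = m → α i = 0)
    (hαmono : ∀ i j : Fin m, i ≤ j → α j ≤ α i)
    (pos : Fin n → Fin m ≃ Fin m)
    (t : Fin m → ℕ) (Φ : Fin n → Option (Fin m))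
    (hfeas : feasible t Φ)
    (hopt : satisf α pos Finset.univ Φ = zval α pos Finset.univ t)
    (i : Fin n) (aT : Fin m) (hΦi : Φ i = some aT)
    (aS : Fin m) (haS : 1 ≤ t aS) :
    α (pos i aS) +
        zval α pos (Finset.univ.erase i) (Function.update t aS (t aS - 1)) ≤
      α (pos i aT) +
        zval α pos (Finset.univ.erase i) (Function.update t aT (t aT - 1)) := by

  classical
  set t' := Function.update t aS (t aS - 1) with ht'
  -- an optimal Ψ for the erased problem with capacity t'
  have hne : (univ.filter (fun Ψ : Fin n → Option (Fin m) => feasible t' Ψ)).Nonempty := by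
    refine ⟨fun _ => none, ?_⟩
    exact Finset.mem_filter.mpr ⟨Finset.mem_univ _, fun a => by simp⟩
  obtain ⟨Ψ, hΨmem, hΨ⟩ := Finset.exists_mem_eq_sup _ hne (satisf α pos (univ.erase i))
  have hΨfeas : feasible t' Ψ := (Finset.mem_filter.mp hΨmem).2
  set Ψ' := Function.update Ψ i (some aS) with hΨ'def
  have hΨ'feas : feasible t Ψ' := by
    intro a
    by_cases ha : a = aS
    · subst ha
      have hsub : (univ.filter (fun j => Ψ' j = some a)) ⊆
          insert i (univ.filter (fun j => Ψ j = some a)) := by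
        intro j hj
        simp only [mem_filter, mem_univ, true_and] at hj
        by_cases hji : j = i
        · simp [hji]
        · rw [Finset.mem_insert]
          right
          simp only [mem_filter, mem_univ, true_and]
          rwa [hΨ'def, Function.update_of_ne hji] at hj
      have h1 := Finset.card_le_card hsub
      have h2 := Finset.card_insert_le i (univ.filter (fun j => Ψ j = some a))
      have h3 := hΨfeas a
      rw [ht', Function.update_self] at h3
      omega
    · have hsub : (univ.filter (fun j => Ψ' j = some a)) ⊆
          (univ.filter (fun j => Ψ j = some a)) := by
        intro j hj
        simp only [mem_filter, mem_univ, true_and] at hj ⊢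
        by_cases hji : j = i
        · subst hji
          rw [hΨ'def, Function.update_self] at hj
          exact absurd (Option.some.inj hj).symm ha
        · rwa [hΨ'def, Function.update_of_ne hji] at hj
      have h3 := hΨfeas a
      rw [ht', Function.update_of_ne ha] at h3
      exact le_trans (Finset.card_le_card hsub) h3
  have hsplitΨ' : satisf α pos univ Ψ' =
      α (pos i aS) + satisf α pos (univ.erase i) Ψ := by
    unfold satisf
    rw [← Finset.sum_erase_add univ _ (Finset.mem_univ i)]
    have hcong : ∑ j ∈ univ.erase i, Option.elim (Ψ' j) 0 (fun a => α (pos j a)) =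
        ∑ j ∈ univ.erase i, Option.elim (Ψ j) 0 (fun a => α (pos j a)) := by
      apply Finset.sum_congr rfl
      intro j hj
      rw [hΨ'def, Function.update_of_ne (Finset.ne_of_mem_erase hj)]
    rw [hcong, hΨ'def, Function.update_self]
    simp [add_comm]
  have hΨ'le : satisf α pos univ Ψ' ≤ zval α pos univ t :=
    Finset.le_sup (Finset.mem_filter.mpr ⟨Finset.mem_univ _, hΨ'feas⟩)
  -- the Φ side
  set Φ'' := Function.update Φ i none with hΦ''def
  have hΦ''feas : feasible (Function.update t aT (t aT - 1)) Φ'' := by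
    intro a
    by_cases ha : a = aT
    · subst ha
      have hsub : (univ.filter (fun j => Φ'' j = some a)) ⊆
          (univ.filter (fun j => Φ j = some a)).erase i := by
        intro j hj
        simp only [mem_filter, mem_univ, true_and] at hj
        by_cases hji : j = i
        · subst hji
          rw [hΦ''def, Function.update_self] at hj
          exact absurd hj (by simp)
        · rw [Finset.mem_erase]
          refine ⟨hji, ?_⟩
          simp only [mem_filter, mem_univ, true_and]
          rwa [hΦ''def, Function.update_of_ne hji] at hj
      have hi_mem : i ∈ univ.filter (fun j => Φ j = some a) := by
        simp [hΦi]
      have h1 := Finset.card_le_card hsub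
      have h2 := Finset.card_erase_of_mem hi_mem
      have h3 := hfeas a
      have h4 := Finset.card_pos.mpr ⟨i, hi_mem⟩
      rw [Function.update_self]
      omega
    · have hsub : (univ.filter (fun j => Φ'' j = some a)) ⊆
          (univ.filter (fun j => Φ j = some a)) := by
        intro j hj
        simp only [mem_filter, mem_univ, true_and] at hj ⊢
        by_cases hji : j = i
        · subst hji
          rw [hΦ''def, Function.update_self] at hj
          exact absurd hj (by simp)
        · rwa [hΦ''def, Function.update_of_ne hji] at hj
      rw [Function.update_of_ne ha]
      exact le_trans (Finset.card_le_card hsub) (hfeas a)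
  have hsplitΦ : satisf α pos univ Φ =
      α (pos i aT) + satisf α pos (univ.erase i) Φ'' := by
    unfold satisf
    rw [← Finset.sum_erase_add univ _ (Finset.mem_univ i)]
    have hcong : ∑ j ∈ univ.erase i, Option.elim (Φ j) 0 (fun a => α (pos j a)) =
        ∑ j ∈ univ.erase i, Option.elim (Φ'' j) 0 (fun a => α (pos j a)) := by
      apply Finset.sum_congr rfl
      intro j hj
      rw [hΦ''def, Function.update_of_ne (Finset.ne_of_mem_erase hj)]
    rw [hcong, hΦi]
    simp [add_comm]
  have hΦ''le : satisf α pos (univ.erase i) Φ'' ≤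
      zval α pos (univ.erase i) (Function.update t aT (t aT - 1)) :=
    Finset.le_sup (Finset.mem_filter.mpr ⟨Finset.mem_univ _, hΦ''feas⟩)
  have hz : zval α pos (univ.erase i) t' = satisf α pos (univ.erase i) Ψ := hΨ
  omega
end

section
/- Let A be a set of m alternatives, N = {1,…,n} a set of agents each with a linear preference order over A, and α an m-candidate positional scoring function. Let t : A → ℕ be a capacity function, a an alternative, and suppose Φ is a partial assignment feasible for t ∪ {a} achieving the optimal satisfaction z_N(t ∪ {a}) with Φ(i) = a for some agent i. If Ψ is a partial assignment feasible for t achieving z_N(t) with Ψ(i) = a_t for a (non-null) alternative a_t, then z_N(t ∪ {a}) − z_N(t) = α(pos_i(a)) + z_{N \ {i}}(t) − α(pos_i(a_t)) − z_{N \ {i}}(t \ {a_t}). -/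
open Finset

open Finset

section Aux
variable {m n : ℕ} (α : Fin m → ℕ) (pos : Fin n → Fin m ≃ Fin m)

lemma satisf_update_notmem (N' : Finset (Fin n)) (Φ : Fin n → Option (Fin m))
    (i : Fin n) (v : Option (Fin m)) (hi : i ∉ N') :
    satisf α pos N' (Function.update Φ i v) = satisf α pos N' Φ := by
  refine Finset.sum_congr rfl fun j hj => ?_
  rw [Function.update_of_ne (by rintro rfl; exact hi hj)]

lemma satisf_univ_split (Φ : Fin n → Option (Fin m)) (i : Fin n) :
    satisf α pos Finset.univ Φ =
      (Option.elim (Φ i) 0 fun a => α (pos i a)) + satisf α pos (Finset.univ.erase i) Φ := by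
  unfold satisf
  rw [← Finset.add_sum_erase _ _ (Finset.mem_univ i)]

lemma filter_update_none (Φ : Fin n → Option (Fin m)) (i : Fin n) (c : Fin m) :
    (univ.filter fun j => Function.update Φ i (none : Option (Fin m)) j = some c) =
      (univ.filter fun j => Φ j = some c).erase i := by
  ext j
  rcases eq_or_ne j i with rfl | h
  · simp
  · simp [Function.update_of_ne h, h]

lemma filter_update_some_ne (Φ : Fin n → Option (Fin m)) (i : Fin n) (b c : Fin m)
    (hc : c ≠ b) :
    (univ.filter fun j => Function.update Φ i (some b) j = some c) =
      (univ.filter fun j => Φ j = some c).erase i := by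
  ext j
  rcases eq_or_ne j i with rfl | h
  · simp [hc.symm]
  · simp [Function.update_of_ne h, h]

lemma filter_update_some_subset (Φ : Fin n → Option (Fin m)) (i : Fin n) (b : Fin m) :
    (univ.filter fun j => Function.update Φ i (some b) j = some b) ⊆
      insert i (univ.filter fun j => Φ j = some b) := by
  intro j hj
  rcases eq_or_ne j i with rfl | h
  · exact Finset.mem_insert_self _ _
  · simp only [Finset.mem_filter, Function.update_of_ne h] at hj
    exact Finset.mem_insert_of_mem (Finset.mem_filter.2 hj)

lemma zval_split (s : Fin m → ℕ) (Χ : Fin n → Option (Fin m))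
    (hfeas : feasible s Χ) (hopt : satisf α pos Finset.univ Χ = zval α pos Finset.univ s)
    (i : Fin n) (b : Fin m) (hΧi : Χ i = some b) :
    zval α pos Finset.univ s =
      α (pos i b) + zval α pos (Finset.univ.erase i) (Function.update s b (s b - 1)) := by
  have hsb : 1 ≤ s b := by
    refine le_trans ?_ (hfeas b)
    rw [Finset.one_le_card]
    exact ⟨i, by simp [hΧi]⟩
  apply le_antisymm
  · -- z_N(s) ≤ α + z_{N\i}(s\b)
    rw [← hopt, satisf_univ_split α pos Χ i, hΧi]
    simp only [Option.elim]
    gcongr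
    -- satisf erase Χ ≤ zval erase (update s b (s b - 1))
    have hfeas' : feasible (Function.update s b (s b - 1)) (Function.update Χ i none) := by
      intro c
      rw [filter_update_none]
      rcases eq_or_ne c b with rfl | h
      · rw [Function.update_self]
        have hmem : i ∈ univ.filter fun j => Χ j = some c := by simp [hΧi]
        rw [Finset.card_erase_of_mem hmem]
        exact Nat.sub_le_sub_right (hfeas c) 1
      · rw [Function.update_of_ne h]
        exact le_trans (Finset.card_le_card (Finset.erase_subset _ _)) (hfeas c)
    calc satisf α pos (univ.erase i) Χ
        = satisf α pos (univ.erase i) (Function.update Χ i none) :=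
          (satisf_update_notmem α pos _ Χ i none (Finset.notMem_erase i univ)).symm
      _ ≤ _ := Finset.le_sup (Finset.mem_filter.2 ⟨Finset.mem_univ _, hfeas'⟩)
  · -- α + z_{N\i}(s\b) ≤ z_N(s)
    obtain ⟨Φ', hΦ'mem, hΦ'eq⟩ := Finset.exists_mem_eq_sup
      (univ.filter fun Φ : Fin n → Option (Fin m) => feasible (Function.update s b (s b - 1)) Φ)
      ⟨fun _ => none, Finset.mem_filter.2 ⟨Finset.mem_univ _, fun c => by simp⟩⟩ (satisf α pos (univ.erase i))
    have hΦ'feas : feasible (Function.update s b (s b - 1)) Φ' :=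
      (Finset.mem_filter.1 hΦ'mem).2
    have hfeas'' : feasible s (Function.update Φ' i (some b)) := by
      intro c
      rcases eq_or_ne c b with rfl | h
      · calc (univ.filter fun j => Function.update Φ' i (some c) j = some c).card
            ≤ (insert i (univ.filter fun j => Φ' j = some c)).card :=
              Finset.card_le_card (filter_update_some_subset Φ' i c)
          _ ≤ (univ.filter fun j => Φ' j = some c).card + 1 := Finset.card_insert_le _ _
          _ ≤ (s c - 1) + 1 := by
              have := hΦ'feas c; rw [Function.update_self] at this; omega
          _ = s c := by omega
      · rw [filter_update_some_ne Φ' i b c h]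
        refine le_trans (Finset.card_le_card (Finset.erase_subset _ _)) ?_
        have := hΦ'feas c; rwa [Function.update_of_ne h] at this
    have key : α (pos i b) + satisf α pos (univ.erase i) Φ' ≤ zval α pos Finset.univ s := by
      have h1 : satisf α pos Finset.univ (Function.update Φ' i (some b)) =
          α (pos i b) + satisf α pos (univ.erase i) Φ' := by
        rw [satisf_univ_split α pos _ i, Function.update_self,
          satisf_update_notmem α pos _ Φ' i (some b) (Finset.notMem_erase i univ)]
        simp [Option.elim]
      rw [← h1]
      exact Finset.le_sup (Finset.mem_filter.2 ⟨Finset.mem_univ _, hfeas''⟩)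
    unfold zval
    rw [← hΦ'eq] at key
    exact key

end Aux

/-- If Φ is optimal and feasible for t ∪ {a} with Φ(i) = a, and Ψ is
optimal and feasible for t with Ψ(i) = aT (non-null), then
z_N(t ∪ {a}) − z_N(t) = α(pos_i(a)) + z_{N∖{i}}(t) − α(pos_i(aT)) − z_{N∖{i}}(t ∖ {aT}). -/
theorem zcap_marginal_gain_formula
    {m n : ℕ}
    (α : Fin m → ℕ) (hα0 : ∀ i : Fin m, (i : ℕ) + 1 = m → α i = 0)
    (hαmono : ∀ i j : Fin m, i ≤ j → α j ≤ α i)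
    (pos : Fin n → Fin m ≃ Fin m)
    (t : Fin m → ℕ) (a : Fin m)
    (Φ : Fin n → Option (Fin m))
    (hfeasΦ : feasible (Function.update t a (t a + 1)) Φ)
    (hoptΦ : satisf α pos Finset.univ Φ =
      zval α pos Finset.univ (Function.update t a (t a + 1)))
    (i : Fin n) (hΦi : Φ i = some a)
    (Ψ : Fin n → Option (Fin m))
    (hfeasΨ : feasible t Ψ)
    (hoptΨ : satisf α pos Finset.univ Ψ = zval α pos Finset.univ t)
    (aT : Fin m) (hΨi : Ψ i = some aT) :
    (zval α pos Finset.univ (Function.update t a (t a + 1)) : ℤ) -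
        (zval α pos Finset.univ t : ℤ) =
      (α (pos i a) : ℤ) + (zval α pos (Finset.univ.erase i) t : ℤ) -
        (α (pos i aT) : ℤ) -
        (zval α pos (Finset.univ.erase i) (Function.update t aT (t aT - 1)) : ℤ) := by
  have hcap : Function.update (Function.update t a (t a + 1)) a
      (Function.update t a (t a + 1) a - 1) = t := by
    funext c
    rcases eq_or_ne c a with rfl | h
    · simp
    · simp [Function.update_of_ne h]
  have h1 := zval_split α pos (Function.update t a (t a + 1)) Φ hfeasΦ hoptΦ i a hΦi
  rw [hcap] at h1
  have h2 := zval_split α pos t Ψ hfeasΨ hoptΨ i aT hΨi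
  rw [h1, h2]
  push_cast
  ring
end
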